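/- arXiv:2410.14440 — 2 statements merged into one kernel-verified Lean document; each statement's English description precedes it below -/
import Mathlib

section
/- For a Set-functor F, the following are equivalent: (i) F preserves 1/4-iso 2/4-mono pullbacks; (ii) F is well-defined on difunctional relations; (iii) F is monotone on difunctional relations; (iv) F preserves 1/4-iso pullbacks. -/
open CategoryTheory

universe u

/-- A relation from `X` to `Y`. -/
abbrev Rel' (X Y : Type u) : Type u := X → Y → Prop

/-- Composite `s ⋅ r` of `r : X ⇸ Y` and `s : Y ⇸ Z`. -/
def relComp {X Y Z : Type u} (s : Rel' Y Z) (r : Rel' X Y) : Rel' X Z :=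
  fun x z => ∃ y, r x y ∧ s y z

/-- Converse relation `r°`. -/
def relConv {X Y : Type u} (r : Rel' X Y) : Rel' Y X := fun y x => r x y

/-- Identity relation `1_X`. -/
def relId (X : Type u) : Rel' X X := fun x y => x = y

/-- The graph relation of a function. -/
def graphRel {X Y : Type u} (f : X → Y) : Rel' X Y := fun x y => f x = y

/-- Pointwise order `r ≤ r'` on relations. -/
def relLe {X Y : Type u} (r r' : Rel' X Y) : Prop := ∀ x y, r x y → r' x y

/-- A relation is total if every `x` is related to some `y`. -/
def relTotal {X Y : Type u} (r : Rel' X Y) : Prop := ∀ x, ∃ y, r x y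

/-- A relation is surjective if every `y` is related to some `x`. -/
def relSurj {X Y : Type u} (r : Rel' X Y) : Prop := ∀ y, ∃ x, r x y

/-- A lax extension of a `Set`-functor `F`. -/
structure LaxExt (F : Type u ⥤ Type u) : Type (u + 1) where
  ext : ∀ {X Y : Type u}, Rel' X Y → Rel' (F.obj X) (F.obj Y)
  mono : ∀ {X Y : Type u} (r r' : Rel' X Y), relLe r r' → relLe (ext r) (ext r')
  lcomp : ∀ {X Y Z : Type u} (r : Rel' X Y) (s : Rel' Y Z),
    relLe (relComp (ext s) (ext r)) (ext (relComp s r))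
  mapLe : ∀ {X Y : Type u} (f : X → Y), relLe (graphRel (F.map (TypeCat.ofHom f))) (ext (graphRel f))
  mapConvLe : ∀ {X Y : Type u} (f : X → Y),
    relLe (relConv (graphRel (F.map (TypeCat.ofHom f)))) (ext (relConv (graphRel f)))

/-- A relax extension of a `Set`-functor `F` (a lax extension without (L2)). -/
structure RelaxExt (F : Type u ⥤ Type u) : Type (u + 1) where
  ext : ∀ {X Y : Type u}, Rel' X Y → Rel' (F.obj X) (F.obj Y)
  mono : ∀ {X Y : Type u} (r r' : Rel' X Y), relLe r r' → relLe (ext r) (ext r')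
  mapLe : ∀ {X Y : Type u} (f : X → Y), relLe (graphRel (F.map (TypeCat.ofHom f))) (ext (graphRel f))
  mapConvLe : ∀ {X Y : Type u} (f : X → Y),
    relLe (relConv (graphRel (F.map (TypeCat.ofHom f)))) (ext (relConv (graphRel f)))

/-- Normality (identity-preservation) of a lax extension. -/
def LaxExt.IsNormal {F : Type u ⥤ Type u} (L : LaxExt F) : Prop :=
  ∀ X : Type u, L.ext (relId X) = relId (F.obj X)

/-- The Barr lifting of a relation along a functor, computed from the canonical span. -/
def BarrLift (F : Type u ⥤ Type u) {X Y : Type u} (r : Rel' X Y) :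
    Rel' (F.obj X) (F.obj Y) :=
  fun a b => ∃ t : F.obj {p : X × Y // r p.1 p.2},
    F.map (TypeCat.ofHom (fun p : {p : X × Y // r p.1 p.2} => p.1.1)) t = a ∧
    F.map (TypeCat.ofHom (fun p : {p : X × Y // r p.1 p.2} => p.1.2)) t = b

/-- A commutative square of functions that is a pullback. -/
def IsPBSquare {P X Y Z : Type u} (p₁ : P → X) (p₂ : P → Y) (f : X → Z) (g : Y → Z) : Prop :=
  (∀ p, f (p₁ p) = g (p₂ p)) ∧ ∀ x y, f x = g y → ∃! p, p₁ p = x ∧ p₂ p = y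

/-- A commutative square of functions that is a weak pullback. -/
def IsWeakPBSquare {P X Y Z : Type u} (p₁ : P → X) (p₂ : P → Y) (f : X → Z) (g : Y → Z) : Prop :=
  (∀ p, f (p₁ p) = g (p₂ p)) ∧ ∀ x y, f x = g y → ∃ p, p₁ p = x ∧ p₂ p = y

/-- `F` preserves 1/4-iso pullbacks. -/
def Preserves14IsoPullbacks (F : Type u ⥤ Type u) : Prop :=
  ∀ (P X Y Z : Type u) (p₁ : P → X) (p₂ : P → Y) (f : X → Z) (g : Y → Z),
    Function.Bijective p₂ → IsPBSquare p₁ p₂ f g →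
      IsPBSquare (F.map (TypeCat.ofHom p₁)) (F.map (TypeCat.ofHom p₂)) (F.map (TypeCat.ofHom f)) (F.map (TypeCat.ofHom g))

/-- `F` preserves 1/4-iso 2/4-mono pullbacks. -/
def Preserves14Iso24MonoPullbacks (F : Type u ⥤ Type u) : Prop :=
  ∀ (P X Y Z : Type u) (p₁ : P → X) (p₂ : P → Y) (f : X → Z) (g : Y → Z),
    Function.Bijective p₂ → Function.Injective p₁ → Function.Injective g →
      IsPBSquare p₁ p₂ f g →
      IsPBSquare (F.map (TypeCat.ofHom p₁)) (F.map (TypeCat.ofHom p₂)) (F.map (TypeCat.ofHom f)) (F.map (TypeCat.ofHom g))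

/-- `F` preserves 1/4-mono pullbacks. -/
def Preserves14MonoPullbacks (F : Type u ⥤ Type u) : Prop :=
  ∀ (P X Y Z : Type u) (p₁ : P → X) (p₂ : P → Y) (f : X → Z) (g : Y → Z),
    Function.Injective p₁ → IsPBSquare p₁ p₂ f g →
      IsPBSquare (F.map (TypeCat.ofHom p₁)) (F.map (TypeCat.ofHom p₂)) (F.map (TypeCat.ofHom f)) (F.map (TypeCat.ofHom g))

/-- `F` preserves inverse images. -/
def PreservesInverseImages (F : Type u ⥤ Type u) : Prop :=
  ∀ (P X Y Z : Type u) (p₁ : P → X) (p₂ : P → Y) (f : X → Z) (g : Y → Z),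
    Function.Injective p₁ → Function.Injective g → IsPBSquare p₁ p₂ f g →
      IsPBSquare (F.map (TypeCat.ofHom p₁)) (F.map (TypeCat.ofHom p₂)) (F.map (TypeCat.ofHom f)) (F.map (TypeCat.ofHom g))

/-- `F` weakly preserves 4/4-epi pullbacks. -/
def WeaklyPreserves44EpiPullbacks (F : Type u ⥤ Type u) : Prop :=
  ∀ (P X Y Z : Type u) (p₁ : P → X) (p₂ : P → Y) (f : X → Z) (g : Y → Z),
    Function.Surjective p₁ → Function.Surjective p₂ →
    Function.Surjective f → Function.Surjective g →
    IsPBSquare p₁ p₂ f g →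
      IsWeakPBSquare (F.map (TypeCat.ofHom p₁)) (F.map (TypeCat.ofHom p₂)) (F.map (TypeCat.ofHom f)) (F.map (TypeCat.ofHom g))

/-- A (nonempty) composable sequence of relations from `X` to `Z`. -/
inductive RelChain : Type u → Type u → Type (u + 1)
  | single : ∀ {X Y : Type u}, Rel' X Y → RelChain X Y
  | cons : ∀ {X Y Z : Type u}, Rel' X Y → RelChain Y Z → RelChain X Z

/-- Composite of a composable sequence of relations (first relation applied first). -/
def RelChain.comp : ∀ {X Z : Type u}, RelChain X Z → Rel' X Z
  | _, _, .single r => r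
  | _, _, .cons r c => relComp (RelChain.comp c) r

/-- Composite of the Barr liftings of a composable sequence of relations. -/
def RelChain.barr (F : Type u ⥤ Type u) : ∀ {X Z : Type u}, RelChain X Z → Rel' (F.obj X) (F.obj Z)
  | _, _, .single r => BarrLift F r
  | _, _, .cons r c => relComp (RelChain.barr F c) (BarrLift F r)

/-- Length (number of relations) of a composable sequence. -/
def RelChain.length : ∀ {X Z : Type u}, RelChain X Z → ℕ
  | _, _, .single _ => 1
  | _, _, .cons _ c => RelChain.length c + 1

/-- All relations in a composable sequence are total and surjective. -/
def RelChain.allTS : ∀ {X Z : Type u}, RelChain X Z → Prop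
  | _, _, .single r => relTotal r ∧ relSurj r
  | _, _, .cons r c => (relTotal r ∧ relSurj r) ∧ RelChain.allTS c

/-- All relations in a composable sequence except the last one are total and surjective. -/
def RelChain.initTS : ∀ {X Z : Type u}, RelChain X Z → Prop
  | _, _, .single _ => True
  | _, _, .cons r c => (relTotal r ∧ relSurj r) ∧ RelChain.initTS c

/-- Composite of the images of a composable sequence of relations under an assignment `R`. -/
def RelChain.lift (F : Type u ⥤ Type u)
    (R : ∀ {X Y : Type u}, Rel' X Y → Rel' (F.obj X) (F.obj Y)) :
    ∀ {X Z : Type u}, RelChain X Z → Rel' (F.obj X) (F.obj Z)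
  | _, _, .single r => R r
  | _, _, .cons r c => relComp (RelChain.lift F (fun {_ _} s => R s) c) (R r)

/-- `r ⋅ (r° ⋅ r)ⁿ`. -/
def dfPow {X Y : Type u} (r : Rel' X Y) : ℕ → Rel' X Y
  | 0 => r
  | n + 1 => relComp (dfPow r n) (relComp (relConv r) r)

/-- The difunctional closure `r̂ = ⋁ₙ r ⋅ (r° ⋅ r)ⁿ` of a relation. -/
def difunClosure {X Y : Type u} (r : Rel' X Y) : Rel' X Y :=
  fun x y => ∃ n : ℕ, dfPow r n x y

/-- `F` is well-defined on difunctional relations. -/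
def WellDefinedOnDifunctional (F : Type u ⥤ Type u) : Prop :=
  ∀ (X Y A A' : Type u) (f : X → A) (g : Y → A) (f' : X → A') (g' : Y → A'),
    relComp (relConv (graphRel g)) (graphRel f) =
      relComp (relConv (graphRel g')) (graphRel f') →
    relComp (relConv (graphRel (F.map (TypeCat.ofHom g)))) (graphRel (F.map (TypeCat.ofHom f))) =
      relComp (relConv (graphRel (F.map (TypeCat.ofHom g')))) (graphRel (F.map (TypeCat.ofHom f')))

/-- `F` is monotone on difunctional relations. -/
def MonotoneOnDifunctional (F : Type u ⥤ Type u) : Prop :=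
  ∀ (X Y A A' : Type u) (f : X → A) (g : Y → A) (f' : X → A') (g' : Y → A'),
    relLe (relComp (relConv (graphRel g)) (graphRel f))
      (relComp (relConv (graphRel g')) (graphRel f')) →
    relLe (relComp (relConv (graphRel (F.map (TypeCat.ofHom g)))) (graphRel (F.map (TypeCat.ofHom f))))
      (relComp (relConv (graphRel (F.map (TypeCat.ofHom g')))) (graphRel (F.map (TypeCat.ofHom f'))))

/-!
Since `g° ⋅ f` relates `x` to `y` iff `f x = g y`, monotonicity on difunctional relations says:
if `f x = g y → f' x = g' y`, then `F f α = F g β → F f' α = F g' β`. Well-definedness gives this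
by comparing `g° ⋅ f` with `⟨g, g'⟩° ⋅ ⟨f, f'⟩` and projecting. A pullback square with bijective
`p₂` amounts to `f x = g y → x = p₁ (p₂⁻¹ y)`, an inclusion of difunctional relations, so
monotonicity transports it along `F`.

For 1/4-iso 2/4-mono pullbacks ⇒ monotonicity, pairing reduces to `u = ⟨f, f'⟩`, `v = ⟨g, g'⟩`,
`π = fst`, where `π (u x) = π (v y)` forces `u x = v y`, and one needs
`F (π ∘ u) a = F (π ∘ v) b → F u a = F v b`. Let `W` and `C` be the union and the intersection of
the ranges of `u` and `v`: the inclusion `C → W` is the pullback of the injection `π|C` along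
`π|W`, so `F u a` and `F v b` both equal `F (C → W) δ` once the common value
`ζ = F (π ∘ u) a` is shown to come from some `δ ∈ F C`. For that, the retractions of the codomain
onto the ranges of `π ∘ u` and of `π ∘ v` both fix `ζ`, and their composite factors through
`π|C`. The retractions need a point common to both ranges; one is adjoined with `Option`.
-/

section SetFunctor

variable (F : Type u ⥤ Type u)

lemma map_ofHom_comp_apply {X Y Z : Type u} (f : X → Y) (g : Y → Z) (x : F.obj X) :
    F.map (↾(g ∘ f)) x = F.map (↾g) (F.map (↾f) x) :=
  F.map_comp_apply (↾f) (↾g) x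

lemma map_ofHom_id_apply {X : Type u} (x : F.obj X) : F.map (↾(id : X → X)) x = x :=
  F.map_id_apply X x

lemma Function.LeftInverse.map_ofHom {X Y : Type u} {s : Y → X} {p : X → Y}
    (h : Function.LeftInverse s p) : Function.LeftInverse (F.map (↾s)) (F.map (↾p)) := by
  intro x
  rw [← map_ofHom_comp_apply, h.comp_eq_id, map_ofHom_id_apply]

lemma map_ofHom_eq_of_comp_eq {X A : Type u} {i : X → A} {r : A → A} (h : r ∘ i = i)
    (x : F.obj X) : F.map (↾r) (F.map (↾i) x) = F.map (↾i) x := by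
  rw [← map_ofHom_comp_apply, h]

lemma map_ofHom_optionMap_some {X Y : Type u} (w : X → Y) (x : F.obj X) :
    F.map (↾(Option.map w)) (F.map (↾some) x) = F.map (↾some) (F.map (↾w) x) := by
  rw [← map_ofHom_comp_apply, ← map_ofHom_comp_apply]

lemma map_ofHom_mem_range_of_inter_subset {X Y C A : Type u} (i : X → A) (j : Y → A) (k : C → A)
    (hne : (Set.range i ∩ Set.range j).Nonempty) (hk : Set.range i ∩ Set.range j ⊆ Set.range k)
    {ζ : F.obj A} (hi : ζ ∈ Set.range (F.map (↾i))) (hj : ζ ∈ Set.range (F.map (↾j))) :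
    ζ ∈ Set.range (F.map (↾k)) := by
  classical
  obtain ⟨a₀, ha₀i, ha₀j⟩ := hne
  let r₁ : A → A := fun a => if a ∈ Set.range i then a else a₀
  let r₂ : A → A := fun a => if a ∈ Set.range j then a else a₀
  have hr₁ : r₁ ∘ i = i := funext fun x => if_pos ⟨x, rfl⟩
  have hr₂ : r₂ ∘ j = j := funext fun y => if_pos ⟨y, rfl⟩
  have hr : ∀ a, r₂ (r₁ a) ∈ Set.range k := by
    intro a
    have h₁ : r₁ a ∈ Set.range i := by
      dsimp only [r₁]
      split_ifs with ha
      exacts [ha, ha₀i]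
    dsimp only [r₂]
    split_ifs with ha
    exacts [hk ⟨h₁, ha⟩, hk ⟨ha₀i, ha₀j⟩]
  choose e he using hr
  obtain ⟨x, rfl⟩ := hi
  obtain ⟨y, hy⟩ := hj
  refine ⟨F.map (↾e) (F.map (↾i) x), ?_⟩
  calc F.map (↾k) (F.map (↾e) (F.map (↾i) x))
      = F.map (↾r₂) (F.map (↾r₁) (F.map (↾i) x)) := by
        rw [← map_ofHom_comp_apply, ← map_ofHom_comp_apply, ← map_ofHom_comp_apply,
          ← map_ofHom_comp_apply]
        exact congrArg (fun φ => F.map (↾(φ ∘ i)) x) (funext he)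
    _ = F.map (↾i) x := by rw [map_ofHom_eq_of_comp_eq F hr₁, ← hy, map_ofHom_eq_of_comp_eq F hr₂]

end SetFunctor

section Preserves14Iso24MonoPullbacks

variable {F : Type u ⥤ Type u} (hF : Preserves14Iso24MonoPullbacks F)
include hF

lemma Preserves14Iso24MonoPullbacks.eq_map_of_map_eq {C W A : Type u} (h : C → W) (k : W → A)
    (hkh : Function.Injective (k ∘ h)) (hpb : ∀ w c, k w = k (h c) → w = h c)
    {γ : F.obj W} {δ : F.obj C} (hγδ : F.map (↾k) γ = F.map (↾(k ∘ h)) δ) :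
    γ = F.map (↾h) δ := by
  have hsq : IsPBSquare h id k (k ∘ h) :=
    ⟨fun _ => rfl, fun w c hwc => ⟨c, ⟨(hpb w c hwc).symm, rfl⟩, fun _ hp => hp.2⟩⟩
  obtain ⟨t, ⟨rfl, ht⟩, -⟩ :=
    (hF C W C A h id k (k ∘ h) Function.bijective_id hkh.of_comp hkh hsq).2 γ δ hγδ
  rw [← ht, map_ofHom_id_apply]

lemma Preserves14Iso24MonoPullbacks.map_eq_map_of_isEmpty {X B A : Type u} [IsEmpty X]
    (u : X → B) (π : B → A) {a : F.obj X} {b : F.obj B}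
    (hab : F.map (↾(π ∘ u)) a = F.map (↾π) b) : F.map (↾u) a = b :=
  (hF.eq_map_of_map_eq u π (fun x => isEmptyElim x) (fun _ x => isEmptyElim x) hab.symm).symm

lemma Preserves14Iso24MonoPullbacks.map_eq_map_of_exists_eq {X Y B A : Type u}
    (u : X → B) (v : Y → B) (π : B → A) (H : ∀ x y, π (u x) = π (v y) → u x = v y)
    (hc : ∃ x y, u x = v y) {a : F.obj X} {b : F.obj Y}
    (hab : F.map (↾(π ∘ u)) a = F.map (↾(π ∘ v)) b) :
    F.map (↾u) a = F.map (↾v) b := by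
  let W := ↥(Set.range u ∪ Set.range v)
  let C := ↥(Set.range u ∩ Set.range v)
  have hπ : ∀ w ∈ Set.range u ∪ Set.range v, ∀ c ∈ Set.range u ∩ Set.range v,
      π w = π c → w = c := by
    rintro w (⟨x, rfl⟩ | ⟨y, rfl⟩) c ⟨⟨x', rfl⟩, ⟨y', hy'⟩⟩ hwc
    · rw [H x y' (hwc.trans (congrArg π hy'.symm)), hy']
    · exact (H x' y hwc.symm).symm
  let h : C → W := Set.inclusion (Set.inter_subset_left.trans Set.subset_union_left)
  let k : W → A := π ∘ Subtype.val
  have hkh : Function.Injective (k ∘ h) := fun c c' hcc =>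
    Subtype.ext (hπ c (Or.inl c.2.1) c' c'.2 hcc)
  have hpb : ∀ w c, k w = k (h c) → w = h c := fun w c hwc =>
    Subtype.ext (hπ w w.2 c c.2 hwc)
  obtain ⟨δ, hδ⟩ : F.map (↾(π ∘ u)) a ∈ Set.range (F.map (↾(k ∘ h))) := by
    refine map_ofHom_mem_range_of_inter_subset F (π ∘ u) (π ∘ v) (k ∘ h) ?_ ?_
      ⟨a, rfl⟩ ⟨b, hab.symm⟩
    · obtain ⟨x, y, hxy⟩ := hc
      exact ⟨π (u x), ⟨x, rfl⟩, y, congrArg π hxy.symm⟩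
    · rintro _ ⟨⟨x, rfl⟩, ⟨y, hy⟩⟩
      exact ⟨⟨u x, ⟨x, rfl⟩, y, (H x y hy.symm).symm⟩, rfl⟩
  let u' : X → W := fun x => ⟨u x, Or.inl ⟨x, rfl⟩⟩
  let v' : Y → W := fun y => ⟨v y, Or.inr ⟨y, rfl⟩⟩
  have hu' : F.map (↾u') a = F.map (↾h) δ :=
    hF.eq_map_of_map_eq h k hkh hpb (by rw [← map_ofHom_comp_apply, hδ])
  have hv' : F.map (↾v') b = F.map (↾h) δ :=
    hF.eq_map_of_map_eq h k hkh hpb (by rw [← map_ofHom_comp_apply, hδ, hab])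
  calc F.map (↾u) a = F.map (↾Subtype.val) (F.map (↾u') a) :=
        map_ofHom_comp_apply F u' (Subtype.val : W → B) a
    _ = F.map (↾Subtype.val) (F.map (↾v') b) := by rw [hu', hv']
    _ = F.map (↾v) b := (map_ofHom_comp_apply F v' (Subtype.val : W → B) b).symm

lemma Preserves14Iso24MonoPullbacks.map_eq_map {X Y B A : Type u}
    (u : X → B) (v : Y → B) (π : B → A) (H : ∀ x y, π (u x) = π (v y) → u x = v y)
    {a : F.obj X} {b : F.obj Y} (hab : F.map (↾(π ∘ u)) a = F.map (↾(π ∘ v)) b) :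
    F.map (↾u) a = F.map (↾v) b := by
  rcases isEmpty_or_nonempty X with hX | ⟨⟨x₀⟩⟩
  · exact hF.map_eq_map_of_isEmpty u π (by rw [hab, map_ofHom_comp_apply])
  rcases isEmpty_or_nonempty Y with hY | -
  · exact (hF.map_eq_map_of_isEmpty v π (by rw [← hab, map_ofHom_comp_apply])).symm
  have H' : ∀ x y, Option.map π (Option.map u x) = Option.map π (Option.map v y) →
      Option.map u x = Option.map v y := by
    rintro (_ | x) (_ | y) hxy
    · rfl
    · simp at hxy
    · simp at hxy
    · simpa using H x y (by simpa using hxy)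
  have hab' : F.map (↾(Option.map π ∘ Option.map u)) (F.map (↾some) a) =
      F.map (↾(Option.map π ∘ Option.map v)) (F.map (↾some) b) := by
    rw [Option.map_comp_map, Option.map_comp_map, map_ofHom_optionMap_some,
      map_ofHom_optionMap_some, hab]
  have key := hF.map_eq_map_of_exists_eq _ _ _ H' ⟨none, none, rfl⟩ hab'
  rw [map_ofHom_optionMap_some, map_ofHom_optionMap_some] at key
  have hl : Function.LeftInverse (fun o : Option B => o.getD (u x₀)) some := fun _ => rfl
  exact (hl.map_ofHom F).injective key

end Preserves14Iso24MonoPullbacks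

lemma relComp_relConv_graphRel_iff {X Y A : Type u} (f : X → A) (g : Y → A) (x : X) (y : Y) :
    relComp (relConv (graphRel g)) (graphRel f) x y ↔ f x = g y :=
  ⟨fun ⟨_, hf, hg⟩ => hf.trans hg.symm, fun h => ⟨f x, rfl, h.symm⟩⟩

lemma relLe_relComp_relConv_graphRel_iff {X Y A A' : Type u} (f : X → A) (g : Y → A)
    (f' : X → A') (g' : Y → A') :
    relLe (relComp (relConv (graphRel g)) (graphRel f))
      (relComp (relConv (graphRel g')) (graphRel f')) ↔
      ∀ x y, f x = g y → f' x = g' y := by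
  simp only [relLe, relComp_relConv_graphRel_iff]

lemma isPBSquare_iff_of_leftInverse {P X Y Z : Type u} {p₁ : P → X} {p₂ : P → Y} {s : Y → P}
    {f : X → Z} {g : Y → Z} (hl : Function.LeftInverse s p₂) (hr : Function.RightInverse s p₂)
    (hcomm : ∀ p, f (p₁ p) = g (p₂ p)) :
    IsPBSquare p₁ p₂ f g ↔ ∀ x y, f x = g y → p₁ (s y) = x := by
  refine ⟨fun hpb x y hxy => ?_, fun H => ⟨hcomm, fun x y hxy => ?_⟩⟩
  · obtain ⟨p, ⟨rfl, rfl⟩, -⟩ := hpb.2 x y hxy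
    rw [hl]
  · exact ⟨s y, ⟨H x y hxy, hr y⟩, fun p hp => by rw [← hp.2, hl]⟩

section

variable {F : Type u ⥤ Type u}

lemma monotoneOnDifunctional_iff : MonotoneOnDifunctional F ↔
    ∀ (X Y A A' : Type u) (f : X → A) (g : Y → A) (f' : X → A') (g' : Y → A'),
      (∀ x y, f x = g y → f' x = g' y) →
      ∀ α β, F.map (↾f) α = F.map (↾g) β → F.map (↾f') α = F.map (↾g') β := by
  simp only [MonotoneOnDifunctional, relLe_relComp_relConv_graphRel_iff]

lemma map_ofHom_eq_of_map_ofHom_prodMk_eq {X Y A A' : Type u} {f : X → A} {g : Y → A}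
    {f' : X → A'} {g' : Y → A'} {α : F.obj X} {β : F.obj Y}
    (h : F.map (↾fun x => (f x, f' x)) α = F.map (↾fun y => (g y, g' y)) β) :
    F.map (↾f') α = F.map (↾g') β := by
  have := congrArg (F.map (↾Prod.snd)) h
  rwa [← map_ofHom_comp_apply, ← map_ofHom_comp_apply] at this

lemma Preserves14Iso24MonoPullbacks.monotoneOnDifunctional
    (hF : Preserves14Iso24MonoPullbacks F) : MonotoneOnDifunctional F := by
  refine monotoneOnDifunctional_iff.2 fun X Y A A' f g f' g' hle α β hαβ => ?_
  exact map_ofHom_eq_of_map_ofHom_prodMk_eq <|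
    hF.map_eq_map (fun x => (f x, f' x)) (fun y => (g y, g' y)) Prod.fst
      (fun x y hxy => Prod.ext hxy (hle x y hxy)) hαβ

lemma MonotoneOnDifunctional.wellDefinedOnDifunctional (hF : MonotoneOnDifunctional F) :
    WellDefinedOnDifunctional F := by
  intro X Y A A' f g f' g' heq
  have h₁ := hF X Y A A' f g f' g' (heq ▸ fun _ _ h => h)
  have h₂ := hF X Y A' A f' g' f g (heq ▸ fun _ _ h => h)
  exact funext₂ fun α β => propext ⟨h₁ α β, h₂ α β⟩

lemma WellDefinedOnDifunctional.monotoneOnDifunctional (hF : WellDefinedOnDifunctional F) :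
    MonotoneOnDifunctional F := by
  refine monotoneOnDifunctional_iff.2 fun X Y A A' f g f' g' hle α β hαβ => ?_
  have heq : relComp (relConv (graphRel g)) (graphRel f) =
      relComp (relConv (graphRel fun y => (g y, g' y))) (graphRel fun x => (f x, f' x)) := by
    ext x y
    simp only [relComp_relConv_graphRel_iff, Prod.mk.injEq]
    exact ⟨fun h => ⟨h, hle x y h⟩, And.left⟩
  have hpair := congrFun₂ (hF X Y A (A × A') f g _ _ heq) α β
  simp only [relComp_relConv_graphRel_iff, eq_iff_iff] at hpair
  exact map_ofHom_eq_of_map_ofHom_prodMk_eq (hpair.1 hαβ)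

lemma MonotoneOnDifunctional.preserves14IsoPullbacks (hF : MonotoneOnDifunctional F) :
    Preserves14IsoPullbacks F := by
  intro P X Y Z p₁ p₂ f g hbij hsq
  obtain ⟨s, hl, hr⟩ := Function.bijective_iff_has_inverse.1 hbij
  have hcomm : ∀ t, F.map (↾f) (F.map (↾p₁) t) = F.map (↾g) (F.map (↾p₂) t) := fun t => by
    rw [← map_ofHom_comp_apply, ← map_ofHom_comp_apply, show f ∘ p₁ = g ∘ p₂ from funext hsq.1]
  rw [isPBSquare_iff_of_leftInverse (hl.map_ofHom F) (hr.map_ofHom F) hcomm]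
  intro α β hαβ
  have hle : ∀ x y, f x = g y → id x = (p₁ ∘ s) y := fun x y hxy =>
    (((isPBSquare_iff_of_leftInverse hl hr hsq.1).1 hsq) x y hxy).symm
  have h := monotoneOnDifunctional_iff.1 hF X Y Z X f g id (p₁ ∘ s) hle α β hαβ
  rw [map_ofHom_id_apply, map_ofHom_comp_apply] at h
  exact h.symm

lemma Preserves14IsoPullbacks.preserves14Iso24MonoPullbacks (hF : Preserves14IsoPullbacks F) :
    Preserves14Iso24MonoPullbacks F :=
  fun P X Y Z p₁ p₂ f g hbij _ _ => hF P X Y Z p₁ p₂ f g hbij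

end

/-- The four conditions of Theorem `p:64` are equivalent. -/
theorem stmt3 (F : Type u ⥤ Type u) :
    (Preserves14Iso24MonoPullbacks F ↔ WellDefinedOnDifunctional F) ∧
    (WellDefinedOnDifunctional F ↔ MonotoneOnDifunctional F) ∧
    (MonotoneOnDifunctional F ↔ Preserves14IsoPullbacks F) :=
  ⟨⟨fun h => h.monotoneOnDifunctional.wellDefinedOnDifunctional,
      fun h => h.monotoneOnDifunctional.preserves14IsoPullbacks.preserves14Iso24MonoPullbacks⟩,
    ⟨WellDefinedOnDifunctional.monotoneOnDifunctional,
      MonotoneOnDifunctional.wellDefinedOnDifunctional⟩,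
    ⟨MonotoneOnDifunctional.preserves14IsoPullbacks,
      fun h => h.preserves14Iso24MonoPullbacks.monotoneOnDifunctional⟩⟩
end

section
/- For a Set-functor F, the following are equivalent: (i) F preserves 1/4-iso pullbacks; (ii) for all relations r₁ : X ⇸ Y, r₂ : Y ⇸ Z and r₃ : Z ⇸ X with r₃ ⋅ r₂ ⋅ r₁ ≤ 1_X, one has F̄r₃ ⋅ F̄r₂ ⋅ F̄r₁ ≤ 1_{F X}; (iii) for all relations r₁ : X ⇸ Y, r₂ : Y ⇸ Z and r₃ : Z ⇸ X with r₃ ⋅ r₂ ⋅ r₁ = 1_X, one has F̄r₃ ⋅ F̄r₂ ⋅ F̄r₁ ≤ 1_{F X}. Here F̄ denotes the Barr lifting of F. -/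
open CategoryTheory

universe u

/-!
Preservation of 1/4-iso pullbacks says: if `f w = f (h t)` forces `w = h t`, then
`F f x = F (f ∘ h) y` forces `x = F h y`. Consequently, if `F a s = F b t`, then `s` and `t` have
the same image under any two maps that agree over `V` and of which the one on `B` factors
through `b`.

For (i) ⇒ (ii), label each point of `Y` and of `Z` lying on an `r₃ ⋅ r₂ ⋅ r₁`-cycle by the base
point of that cycle in `X` (unique by hypothesis), and every other point by itself. Gluing along
the spans of `r₁`, `r₂`, `r₃` sends both ends of a chain in the Barr liftings to one element of
`F (X ⊕ (Y ⊕ Z))`; it lies in `F (X ⊕ Y)` and in `F (X ⊕ Z)`, hence (set functors preserve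
nonempty intersections) in `F X`, and there it is the common value of both ends.
-/

open TypeCat

namespace CategoryTheory.Functor

variable (F : Type u ⥤ Type u)

@[simp]
theorem map_ofHom_map_ofHom {A B C : Type u} (u : A → B) (v : B → C) (t : F.obj A) :
    F.map (ofHom v) (F.map (ofHom u) t) = F.map (ofHom (v ∘ u)) t :=
  (F.map_comp_apply (ofHom u) (ofHom v) t).symm

@[simp]
theorem map_ofHom_id {A : Type u} (t : F.obj A) : F.map (ofHom id) t = t :=
  F.map_id_apply A t

/-- Every `Set`-functor preserves nonempty intersections; here the intersection of
`X ⊕ Y` and `X ⊕ Z` inside `X ⊕ (Y ⊕ Z)`. -/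
theorem exists_map_inl_eq_of_map_sumMap_eq {X Y Z : Type u} [Nonempty X]
    {u : F.obj (X ⊕ Y)} {v : F.obj (X ⊕ Z)}
    (h : F.map (ofHom (Sum.map id Sum.inl)) u = F.map (ofHom (Sum.map id Sum.inr)) v) :
    ∃ w : F.obj X, F.map (ofHom (Sum.map id Sum.inl)) u =
      F.map (ofHom (Sum.inl : X → X ⊕ (Y ⊕ Z))) w := by
  obtain ⟨x₀⟩ := ‹Nonempty X›
  let κ : X ⊕ (Y ⊕ Z) → X ⊕ (Y ⊕ Z) :=
    Sum.elim Sum.inl (Sum.elim (fun _ => Sum.inl x₀) (Sum.inr ∘ Sum.inr))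
  have hκZ : κ ∘ Sum.map id Sum.inr = Sum.map id Sum.inr := by
    funext w; cases w <;> rfl
  have hκY : κ ∘ Sum.map id Sum.inl = Sum.inl ∘ Sum.elim id fun _ => x₀ := by
    funext w; cases w <;> rfl
  refine ⟨F.map (ofHom (Sum.elim id fun _ => x₀)) u, ?_⟩
  calc F.map (ofHom (Sum.map id Sum.inl)) u
      = F.map (ofHom κ) (F.map (ofHom (Sum.map id Sum.inr)) v) := by
        rw [map_ofHom_map_ofHom, hκZ, h]
    _ = F.map (ofHom κ) (F.map (ofHom (Sum.map id Sum.inl)) u) := by rw [h]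
    _ = _ := by rw [map_ofHom_map_ofHom, hκY, ← map_ofHom_map_ofHom]

end CategoryTheory.Functor

open Functor

theorem preserves14IsoPullbacks_iff (F : Type u ⥤ Type u) :
    Preserves14IsoPullbacks F ↔
      ∀ (T W V : Type u) (f : W → V) (h : T → W), (∀ w t, f w = f (h t) → w = h t) →
        ∀ x y, F.map (ofHom f) x = F.map (ofHom (f ∘ h)) y → x = F.map (ofHom h) y := by
  constructor
  · intro hF T W V f h hfib x y hxy
    have hsq : IsPBSquare h id f (f ∘ h) :=
      ⟨fun _ => rfl, fun w t hw => ⟨t, ⟨(hfib w t hw).symm, rfl⟩, fun _ hq => hq.2⟩⟩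
    obtain ⟨p, ⟨rfl, hp⟩, -⟩ := (hF T W T V h id f (f ∘ h) Function.bijective_id hsq).2 x y hxy
    rw [← hp, map_ofHom_id]
  · intro hF P X Y Z p₁ p₂ f g hp₂ hpb
    let e := Equiv.ofBijective p₂ hp₂
    have hp₂e : p₂ ∘ e.symm = id := funext e.apply_symm_apply
    have hep₂ : e.symm ∘ p₂ = id := funext e.symm_apply_apply
    have hg : g = f ∘ (p₁ ∘ e.symm) :=
      funext fun y => by
        rw [Function.comp_apply, Function.comp_apply, hpb.1,
          show p₂ (e.symm y) = y from e.apply_symm_apply y]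
    have hfib : ∀ x y, f x = f (p₁ (e.symm y)) → x = p₁ (e.symm y) := by
      intro x y hxy
      obtain ⟨p, ⟨rfl, rfl⟩, -⟩ := hpb.2 x y (hxy.trans (congrFun hg y).symm)
      rw [show e.symm (p₂ p) = p from congrFun hep₂ p]
    have hcomm : f ∘ p₁ = g ∘ p₂ := funext hpb.1
    refine ⟨fun q => by rw [map_ofHom_map_ofHom, map_ofHom_map_ofHom, hcomm], ?_⟩
    intro a b hab
    have ha : a = F.map (ofHom (p₁ ∘ e.symm)) b := hF Y X Z f _ hfib a b (hg ▸ hab)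
    refine ⟨F.map (ofHom e.symm) b, ⟨?_, ?_⟩, fun q hq => ?_⟩
    · rw [map_ofHom_map_ofHom, ha]
    · rw [map_ofHom_map_ofHom, hp₂e, map_ofHom_id]
    · rw [← hq.2, map_ofHom_map_ofHom, hep₂, map_ofHom_id]

namespace Preserves14IsoPullbacks

variable {F : Type u ⥤ Type u}

theorem map_eq_map_of_compatible (hF : Preserves14IsoPullbacks F) {A B V C : Type u}
    {a : A → V} {b : B → V} {s : F.obj A} {t : F.obj B}
    (hst : F.map (ofHom a) s = F.map (ofHom b) t)
    (φ : A → C) (ψ : B → C) (hψ : ∀ q q', b q = b q' → ψ q = ψ q')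
    (hφ : ∀ p q, a p = b q → φ p = ψ q) :
    F.map (ofHom φ) s = F.map (ofHom ψ) t := by
  classical
  -- `a` factors through `f`, whose fibres over `Set.range b` are singletons
  let W : Type u := Set.range b ⊕ {p : A // a p ∉ Set.range b}
  let f : W → V := Sum.elim Subtype.val fun p => a p.1
  let h : B → W := fun q => .inl ⟨b q, q, rfl⟩
  let ρ : A → W := fun p => if hp : a p ∈ Set.range b then .inl ⟨a p, hp⟩ else .inr ⟨p, hp⟩
  let μ : W → C := Sum.elim (fun v => ψ v.2.choose) fun p => φ p.1
  have hfρ : f ∘ ρ = a := funext fun p => by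
    simp only [Function.comp_apply, ρ]
    split <;> rfl
  have hμρ : μ ∘ ρ = φ := funext fun p => by
    simp only [Function.comp_apply, ρ]
    split
    next hp => exact (hφ p _ hp.choose_spec.symm).symm
    next => rfl
  have hμh : μ ∘ h = ψ := funext fun q => hψ _ _ (Set.mem_range_self q).choose_spec
  have hfib : ∀ w q, f w = f (h q) → w = h q := by
    rintro (⟨v, hv⟩ | ⟨p, hp⟩) q hw
    · cases (hw : v = b q)
      rfl
    · exact absurd ⟨q, hw.symm⟩ hp
  have hρ : F.map (ofHom ρ) s = F.map (ofHom h) t :=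
    (preserves14IsoPullbacks_iff F).1 hF _ _ _ f h hfib _ _
      (by rw [map_ofHom_map_ofHom, hfρ, hst]; rfl)
  rw [← hμρ, ← hμh, ← map_ofHom_map_ofHom, hρ, map_ofHom_map_ofHom]

theorem eq_map_of_isEmpty (hF : Preserves14IsoPullbacks F) {A B V : Type u} [IsEmpty B]
    {a : A → V} {b : B → V} {s : F.obj A} {t : F.obj B}
    (hst : F.map (ofHom a) s = F.map (ofHom b) t) :
    s = F.map (ofHom isEmptyElim) t := by
  simpa using hF.map_eq_map_of_compatible hst id isEmptyElim (fun q => isEmptyElim q)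
    (fun _ q => isEmptyElim q)

theorem map_eq_of_map_eq_map_inl (hF : Preserves14IsoPullbacks F) {A X C : Type u}
    {k : A → X ⊕ C} {π : A → X} (hk : ∀ p x, k p = .inl x → π p = x) {s : F.obj A} {w : F.obj X}
    (h : F.map (ofHom k) s = F.map (ofHom Sum.inl) w) : F.map (ofHom π) s = w := by
  simpa using hF.map_eq_map_of_compatible h π id (fun _ _ h => Sum.inl_injective h) hk

end Preserves14IsoPullbacks

section Cycles

variable {X Y Z : Type u} (r₁ : Rel' X Y) (r₂ : Rel' Y Z) (r₃ : Rel' Z X)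

open Classical in
noncomputable def cycleBaseY (y : Y) : X ⊕ Y :=
  if h : ∃ x z x', r₁ x y ∧ r₂ y z ∧ r₃ z x' then .inl h.choose else .inr y

open Classical in
noncomputable def cycleBaseZ (z : Z) : X ⊕ Z :=
  if h : ∃ x' x y, r₁ x y ∧ r₂ y z ∧ r₃ z x' then .inl h.choose else .inr z

variable {r₁ r₂ r₃}

theorem cycleBaseY_eq (hU : relLe (relComp r₃ (relComp r₂ r₁)) (relId X))
    {x : X} {y : Y} {z : Z} {x' : X} (h₁ : r₁ x y) (h₂ : r₂ y z) (h₃ : r₃ z x') :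
    cycleBaseY r₁ r₂ r₃ y = .inl x := by
  have hc : ∃ x z x', r₁ x y ∧ r₂ y z ∧ r₃ z x' := ⟨x, z, x', h₁, h₂, h₃⟩
  obtain ⟨z', x'', h₁', h₂', h₃'⟩ := hc.choose_spec
  rw [cycleBaseY, dif_pos hc, hU _ _ ⟨_, ⟨_, h₁', h₂'⟩, h₃'⟩, hU _ _ ⟨_, ⟨_, h₁, h₂'⟩, h₃'⟩]

theorem cycleBaseZ_eq (hU : relLe (relComp r₃ (relComp r₂ r₁)) (relId X))
    {x : X} {y : Y} {z : Z} {x' : X} (h₁ : r₁ x y) (h₂ : r₂ y z) (h₃ : r₃ z x') :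
    cycleBaseZ r₁ r₂ r₃ z = .inl x' := by
  have hc : ∃ x' x y, r₁ x y ∧ r₂ y z ∧ r₃ z x' := ⟨x', x, y, h₁, h₂, h₃⟩
  obtain ⟨x'', y', h₁', h₂', h₃'⟩ := hc.choose_spec
  rw [cycleBaseZ, dif_pos hc, ← hU _ _ ⟨_, ⟨_, h₁', h₂'⟩, h₃'⟩, hU _ _ ⟨_, ⟨_, h₁', h₂'⟩, h₃⟩]

theorem eq_of_cycleBaseY_eq_inl (hU : relLe (relComp r₃ (relComp r₂ r₁)) (relId X))
    {x : X} {y : Y} {x'' : X} (h₁ : r₁ x y) (h : cycleBaseY r₁ r₂ r₃ y = .inl x'') : x = x'' := by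
  by_cases hc : ∃ x z x', r₁ x y ∧ r₂ y z ∧ r₃ z x'
  · obtain ⟨-, z, x', -, h₂, h₃⟩ := hc
    rw [cycleBaseY_eq hU h₁ h₂ h₃] at h
    exact Sum.inl_injective h
  · rw [cycleBaseY, dif_neg hc] at h
    cases h

theorem eq_of_cycleBaseZ_eq_inl (hU : relLe (relComp r₃ (relComp r₂ r₁)) (relId X))
    {z : Z} {x' x'' : X} (h₃ : r₃ z x') (h : cycleBaseZ r₁ r₂ r₃ z = .inl x'') : x' = x'' := by
  by_cases hc : ∃ x' x y, r₁ x y ∧ r₂ y z ∧ r₃ z x'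
  · obtain ⟨-, x, y, h₁, h₂, -⟩ := hc
    rw [cycleBaseZ_eq hU h₁ h₂ h₃] at h
    exact Sum.inl_injective h
  · rw [cycleBaseZ, dif_neg hc] at h
    cases h

end Cycles

abbrev RelGraph {X Y : Type u} (r : Rel' X Y) : Type u := {p : X × Y // r p.1 p.2}

namespace Preserves14IsoPullbacks

variable {F : Type u ⥤ Type u} {X Y Z : Type u} {r₁ : Rel' X Y} {r₂ : Rel' Y Z} {r₃ : Rel' Z X}

theorem map_fst_eq_map_snd_of_isEmpty (hF : Preserves14IsoPullbacks F) [IsEmpty X]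
    {t₁ : F.obj (RelGraph r₁)} {t₂ : F.obj (RelGraph r₂)} {t₃ : F.obj (RelGraph r₃)}
    (h₁₂ : F.map (ofHom fun p : RelGraph r₁ => p.1.2) t₁ =
      F.map (ofHom fun p : RelGraph r₂ => p.1.1) t₂)
    (h₂₃ : F.map (ofHom fun p : RelGraph r₂ => p.1.2) t₂ =
      F.map (ofHom fun p : RelGraph r₃ => p.1.1) t₃) :
    F.map (ofHom fun p : RelGraph r₁ => p.1.1) t₁ =
      F.map (ofHom fun p : RelGraph r₃ => p.1.2) t₃ := by
  have : IsEmpty (RelGraph r₁) := ⟨fun p => isEmptyElim p.1.1⟩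
  have e₂ : t₂ = F.map (ofHom isEmptyElim) t₁ := hF.eq_map_of_isEmpty h₁₂.symm
  have e₃ : t₃ = F.map (ofHom isEmptyElim) t₁ :=
    hF.eq_map_of_isEmpty (h₂₃.symm.trans (by rw [e₂, map_ofHom_map_ofHom]))
  rw [e₃, map_ofHom_map_ofHom]
  exact congrArg (fun k => F.map (ofHom k) t₁) (funext isEmptyElim)

theorem map_cycleBaseY_eq_map_cycleBaseZ (hF : Preserves14IsoPullbacks F)
    (hU : relLe (relComp r₃ (relComp r₂ r₁)) (relId X))
    {t₁ : F.obj (RelGraph r₁)} {t₂ : F.obj (RelGraph r₂)} {t₃ : F.obj (RelGraph r₃)}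
    (h₁₂ : F.map (ofHom fun p : RelGraph r₁ => p.1.2) t₁ =
      F.map (ofHom fun p : RelGraph r₂ => p.1.1) t₂)
    (h₂₃ : F.map (ofHom fun p : RelGraph r₂ => p.1.2) t₂ =
      F.map (ofHom fun p : RelGraph r₃ => p.1.1) t₃) :
    F.map (ofHom (Sum.map id Sum.inl : X ⊕ Y → X ⊕ (Y ⊕ Z)))
        (F.map (ofHom fun p : RelGraph r₁ => cycleBaseY r₁ r₂ r₃ p.1.2) t₁) =
      F.map (ofHom (Sum.map id Sum.inr : X ⊕ Z → X ⊕ (Y ⊕ Z)))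
        (F.map (ofHom fun p : RelGraph r₃ => cycleBaseZ r₁ r₂ r₃ p.1.1) t₃) := by
  classical
  -- the two labellings agree on every `r₂`-pair whose ends both lie on a cycle
  let γ : RelGraph r₂ → X ⊕ (Y ⊕ Z) := fun q =>
    if ∃ x, r₁ x q.1.1 then Sum.map id Sum.inl (cycleBaseY r₁ r₂ r₃ q.1.1)
    else Sum.map id Sum.inr (cycleBaseZ r₁ r₂ r₃ q.1.2)
  have hγY : F.map (ofHom γ) t₂ =
      F.map (ofHom fun p : RelGraph r₁ => Sum.map id Sum.inl (cycleBaseY r₁ r₂ r₃ p.1.2)) t₁ := by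
    refine hF.map_eq_map_of_compatible h₁₂.symm γ _ (fun _ _ h => by simp only [h])
      fun q p hqp => ?_
    simp only [γ, if_pos (⟨p.1.1, hqp ▸ p.2⟩ : ∃ x, r₁ x q.1.1), hqp]
  have hγZ : F.map (ofHom γ) t₂ =
      F.map (ofHom fun p : RelGraph r₃ => Sum.map id Sum.inr (cycleBaseZ r₁ r₂ r₃ p.1.1)) t₃ := by
    refine hF.map_eq_map_of_compatible h₂₃ γ _ (fun _ _ h => by simp only [h])
      fun q p hqp => ?_
    have h₃ : r₃ q.1.2 p.1.2 := hqp ▸ p.2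
    by_cases h₁ : ∃ x, r₁ x q.1.1
    · obtain ⟨x, hx⟩ := h₁
      have hxp : x = p.1.2 := hU _ _ ⟨_, ⟨_, hx, q.2⟩, h₃⟩
      simp only [γ, if_pos (⟨x, hx⟩ : ∃ x, r₁ x q.1.1), ← hqp,
        cycleBaseY_eq hU hx q.2 h₃, cycleBaseZ_eq hU hx q.2 h₃, hxp]
      rfl
    · simp only [γ, if_neg h₁, hqp]
  rw [map_ofHom_map_ofHom, map_ofHom_map_ofHom, ← hγY, ← hγZ]

theorem map_fst_eq_map_snd (hF : Preserves14IsoPullbacks F)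
    (hU : relLe (relComp r₃ (relComp r₂ r₁)) (relId X))
    {t₁ : F.obj (RelGraph r₁)} {t₂ : F.obj (RelGraph r₂)} {t₃ : F.obj (RelGraph r₃)}
    (h₁₂ : F.map (ofHom fun p : RelGraph r₁ => p.1.2) t₁ =
      F.map (ofHom fun p : RelGraph r₂ => p.1.1) t₂)
    (h₂₃ : F.map (ofHom fun p : RelGraph r₂ => p.1.2) t₂ =
      F.map (ofHom fun p : RelGraph r₃ => p.1.1) t₃) :
    F.map (ofHom fun p : RelGraph r₁ => p.1.1) t₁ =
      F.map (ofHom fun p : RelGraph r₃ => p.1.2) t₃ := by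
  rcases isEmpty_or_nonempty X with hX | hX
  · exact hF.map_fst_eq_map_snd_of_isEmpty h₁₂ h₂₃
  have hglue := hF.map_cycleBaseY_eq_map_cycleBaseZ hU h₁₂ h₂₃
  obtain ⟨w, hw⟩ := F.exists_map_inl_eq_of_map_sumMap_eq hglue
  have hw₁ : F.map (ofHom fun p : RelGraph r₁ => p.1.1) t₁ = w :=
    hF.map_eq_of_map_eq_map_inl (fun p x h => eq_of_cycleBaseY_eq_inl hU p.2
      (Sum.map_injective.2 ⟨Function.injective_id, Sum.inl_injective⟩ h))
      (by rw [← hw, map_ofHom_map_ofHom])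
  have hw₃ : F.map (ofHom fun p : RelGraph r₃ => p.1.2) t₃ = w :=
    hF.map_eq_of_map_eq_map_inl (fun p x h => eq_of_cycleBaseZ_eq_inl hU p.2
      (Sum.map_injective.2 ⟨Function.injective_id, Sum.inr_injective⟩ h))
      (by rw [← hw, hglue, map_ofHom_map_ofHom])
  rw [hw₁, hw₃]

theorem barrLift_comp_comp_le_id (hF : Preserves14IsoPullbacks F)
    (h : relLe (relComp r₃ (relComp r₂ r₁)) (relId X)) :
    relLe (relComp (BarrLift F r₃) (relComp (BarrLift F r₂) (BarrLift F r₁)))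
      (relId (F.obj X)) := by
  rintro _ _ ⟨c, ⟨b, ⟨t₁, rfl, h₁₂⟩, ⟨t₂, h₂₁, h₂₃⟩⟩, ⟨t₃, h₃₂, rfl⟩⟩
  exact hF.map_fst_eq_map_snd h (h₁₂.trans h₂₁.symm) (h₂₃.trans h₃₂.symm)

end Preserves14IsoPullbacks

theorem BarrLift.map {F : Type u ⥤ Type u} {X Y X' Y' : Type u} {r : Rel' X Y} {r' : Rel' X' Y'}
    (i : X → X') (j : Y → Y') (hr : ∀ x y, r x y → r' (i x) (j y)) {a : F.obj X} {b : F.obj Y}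
    (h : BarrLift F r a b) : BarrLift F r' (F.map (ofHom i) a) (F.map (ofHom j) b) := by
  obtain ⟨t, rfl, rfl⟩ := h
  refine ⟨F.map (ofHom fun p : RelGraph r => (⟨(i p.1.1, j p.1.2), hr _ _ p.2⟩ : RelGraph r')) t,
    ?_, ?_⟩ <;> simp only [map_ofHom_map_ofHom]

section

variable (F : Type u ⥤ Type u)

theorem barrLift_relId_self {X : Type u} (a : F.obj X) : BarrLift F (relId X) a a :=
  ⟨F.map (ofHom fun x => (⟨(x, x), rfl⟩ : RelGraph (relId X))) a,
    by rw [map_ofHom_map_ofHom]; exact F.map_ofHom_id a,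
    by rw [map_ofHom_map_ofHom]; exact F.map_ofHom_id a⟩

theorem barrLift_graphRel_map {X Y : Type u} (u : X → Y) (a : F.obj X) :
    BarrLift F (graphRel u) a (F.map (ofHom u) a) := by
  simpa using (barrLift_relId_self F a).map id u fun _ _ h => congrArg u h

theorem barrLift_relConv_graphRel_map {X Y : Type u} (u : X → Y) (a : F.obj X) :
    BarrLift F (relConv (graphRel u)) (F.map (ofHom u) a) a := by
  simpa using (barrLift_relId_self F a).map u id fun _ _ h => congrArg u h.symm

end

/-- The graphs of `f`, `(f ∘ h)°` and `h` compose to a subidentity exactly when `h` and `id`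
form a pullback of `f` and `f ∘ h`. -/
theorem preserves14IsoPullbacks_of_barrLift_comp_comp_le_id {F : Type u ⥤ Type u}
    (h : ∀ (X Y Z : Type u) (r₁ : Rel' X Y) (r₂ : Rel' Y Z) (r₃ : Rel' Z X),
      relLe (relComp r₃ (relComp r₂ r₁)) (relId X) →
      relLe (relComp (BarrLift F r₃) (relComp (BarrLift F r₂) (BarrLift F r₁)))
        (relId (F.obj X))) :
    Preserves14IsoPullbacks F := by
  refine (preserves14IsoPullbacks_iff F).2 fun T W V f k hfib x y hxy => ?_
  refine h W V T (graphRel f) (relConv (graphRel (f ∘ k))) (graphRel k) ?_ x _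
    ⟨y, ⟨_, barrLift_graphRel_map F f x, hxy ▸ barrLift_relConv_graphRel_map F (f ∘ k) y⟩,
      barrLift_graphRel_map F k y⟩
  rintro w _ ⟨t, ⟨v, rfl, hv⟩, rfl⟩
  exact hfib w t hv.symm

/-- Adjoining an identity path through extra copies of `X` turns a subidentity composite into the
identity, and the Barr liftings of the original relations embed into those of the new ones. -/
theorem barrLift_comp_comp_le_id_of_eq {F : Type u ⥤ Type u}
    (h : ∀ (X Y Z : Type u) (r₁ : Rel' X Y) (r₂ : Rel' Y Z) (r₃ : Rel' Z X),
      relComp r₃ (relComp r₂ r₁) = relId X →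
      relLe (relComp (BarrLift F r₃) (relComp (BarrLift F r₂) (BarrLift F r₁)))
        (relId (F.obj X)))
    {X Y Z : Type u} {r₁ : Rel' X Y} {r₂ : Rel' Y Z} {r₃ : Rel' Z X}
    (hle : relLe (relComp r₃ (relComp r₂ r₁)) (relId X)) :
    relLe (relComp (BarrLift F r₃) (relComp (BarrLift F r₂) (BarrLift F r₁)))
      (relId (F.obj X)) := by
  let r₁' : Rel' X (Y ⊕ X) := fun x => Sum.elim (r₁ x) (relId X x)
  let r₂' : Rel' (Y ⊕ X) (Z ⊕ X) := Sum.LiftRel r₂ (relId X)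
  let r₃' : Rel' (Z ⊕ X) X := Sum.elim r₃ (relId X)
  have heq : relComp r₃' (relComp r₂' r₁') = relId X := by
    funext x x'
    refine propext ⟨?_, fun hx => ⟨.inr x, ⟨.inr x, rfl, .inr rfl⟩, hx⟩⟩
    rintro ⟨_, ⟨_, h₁, h₂ | h₂⟩, h₃⟩
    · exact hle x x' ⟨_, ⟨_, h₁, h₂⟩, h₃⟩
    · exact h₁.trans (h₂.trans h₃)
  rintro a _ ⟨c, ⟨b, hab, hbc⟩, hca⟩
  refine h X _ _ r₁' r₂' r₃' heq a _ ⟨F.map (ofHom Sum.inl) c,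
    ⟨F.map (ofHom Sum.inl) b, ?_, hbc.map _ _ fun _ _ => .inl⟩, ?_⟩
  · simpa using hab.map id Sum.inl fun _ _ h => h
  · simpa using hca.map Sum.inl id fun _ _ h => h

/-- Equivalence of preservation of 1/4-iso pullbacks with the subidentity conditions
on composable triples of relations. -/
theorem stmt12 (F : Type u ⥤ Type u) :
    (Preserves14IsoPullbacks F ↔
      ∀ (X Y Z : Type u) (r₁ : Rel' X Y) (r₂ : Rel' Y Z) (r₃ : Rel' Z X),
        relLe (relComp r₃ (relComp r₂ r₁)) (relId X) →
        relLe (relComp (BarrLift F r₃) (relComp (BarrLift F r₂) (BarrLift F r₁)))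
          (relId (F.obj X))) ∧
    ((∀ (X Y Z : Type u) (r₁ : Rel' X Y) (r₂ : Rel' Y Z) (r₃ : Rel' Z X),
        relLe (relComp r₃ (relComp r₂ r₁)) (relId X) →
        relLe (relComp (BarrLift F r₃) (relComp (BarrLift F r₂) (BarrLift F r₁)))
          (relId (F.obj X))) ↔
      ∀ (X Y Z : Type u) (r₁ : Rel' X Y) (r₂ : Rel' Y Z) (r₃ : Rel' Z X),
        relComp r₃ (relComp r₂ r₁) = relId X →
        relLe (relComp (BarrLift F r₃) (relComp (BarrLift F r₂) (BarrLift F r₁)))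
          (relId (F.obj X))) :=
  ⟨⟨fun hF _ _ _ _ _ _ => hF.barrLift_comp_comp_le_id,
      preserves14IsoPullbacks_of_barrLift_comp_comp_le_id⟩,
    ⟨fun h X Y Z r₁ r₂ r₃ heq => h X Y Z r₁ r₂ r₃ (heq ▸ fun _ _ => id),
      fun h _ _ _ _ _ _ => barrLift_comp_comp_le_id_of_eq h⟩⟩
end
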